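/- Let θ* ∈ ℝ^K with θ*_k = ln(μ_k/ν_k). Define the dual network parameters p̄_{kl} = ν_l p_{lk}/ν_k and λ̄_k = ν_k (1 − Σ_{l=1}^K p_{kl}), and let P̄ = (p̄_{kl}), λ̄ = (λ̄_k). Then the gradient of H_0 at θ* satisfies −∇H_0(θ*) = λ̄ − (I − P̄^T) μ. -/

import Mathlib

/-!
Differentiating `H₀` in the coordinate `θ_k` gives
`e^{θ_k} λ_k + e^{θ_k} Σ_j e^{-θ_j} p_{jk} μ_j - e^{-θ_k} (Σ_l (e^{θ_l} - 1) p_{kl} + 1) μ_k`.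
At `θ*` we have `e^{θ*_j} = μ_j / ν_j`, so the first two terms become `(μ_k / ν_k) (λ_k + (Pᵀν)_k)`,
which is `μ_k` by the traffic equation `(I - Pᵀ) ν = λ`, while the subtracted term expands to
`(P̄ᵀ μ)_k + λ̄_k`.
-/

open Matrix Real Function

section NetworkDuality

variable {n : Type*} [Fintype n] [DecidableEq n]

theorem isUnit_one_sub_of_one_notMem_spectrum {A : Matrix n n ℝ}
    (h : (1 : ℂ) ∉ spectrum ℂ (A.map Complex.ofReal)) : IsUnit (1 - A) := by
  have hmap : 1 - A.map Complex.ofReal = Complex.ofRealHom.mapMatrix (1 - A) := by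
    rw [map_sub, map_one]; rfl
  rw [spectrum.notMem_iff, map_one, hmap, isUnit_iff_isUnit_det, ← RingHom.map_det,
    isUnit_map_iff] at h
  exact (isUnit_iff_isUnit_det _).mpr h

/-- The vector `h(θ)` with components `h_k(θ)`. -/
noncomputable def hVec (P : Matrix n n ℝ) (θ : n → ℝ) : n → ℝ :=
  fun k => exp (-θ k) * ((∑ l, (exp (θ l) - 1) * P k l) + 1) - 1

noncomputable def H0 (P : Matrix n n ℝ) (lam mu θ : n → ℝ) : ℝ :=
  (∑ k, (exp (θ k) - 1) * lam k) + ∑ k, hVec P θ k * mu k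

noncomputable def partialH0 (P : Matrix n n ℝ) (lam mu θ : n → ℝ) (k : n) : ℝ :=
  exp (θ k) * lam k + exp (θ k) * ∑ j, exp (-θ j) * P j k * mu j
    - exp (-θ k) * ((∑ l, (exp (θ l) - 1) * P k l) + 1) * mu k

noncomputable def dualMatrix (P : Matrix n n ℝ) (ν : n → ℝ) : Matrix n n ℝ :=
  of fun k l => ν l * P l k / ν k

def dualArrival (P : Matrix n n ℝ) (ν : n → ℝ) : n → ℝ :=
  fun k => ν k * (1 - ∑ l, P k l)

omit [Fintype n] in
theorem HasDerivAt.comp_update_apply {g : ℝ → ℝ} {g' : ℝ} {θ : n → ℝ} {k : n}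
    (hg : HasDerivAt g g' (θ k)) (j : n) :
    HasDerivAt (fun s => g (update θ k s j)) (if j = k then g' else 0) (θ k) := by
  by_cases h : j = k
  · subst h; simpa using hg
  · simpa [update_of_ne h, h] using hasDerivAt_const (θ k) (g (θ j))

theorem hasDerivAt_sum_exp_update (θ c : n → ℝ) (k : n) :
    HasDerivAt (fun s => ∑ l, (exp (update θ k s l) - 1) * c l) (exp (θ k) * c k) (θ k) := by
  refine (HasDerivAt.fun_sum (u := Finset.univ) fun l _ =>
    (((hasDerivAt_exp (θ k)).comp_update_apply l).sub_const 1).mul_const (c l)).congr_deriv ?_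
  simp [ite_mul]

theorem hasDerivAt_hVec_update (P : Matrix n n ℝ) (θ : n → ℝ) (k j : n) :
    HasDerivAt (fun s => hVec P (update θ k s) j)
      ((if j = k then -exp (-θ k) else 0) * ((∑ l, (exp (θ l) - 1) * P j l) + 1)
        + exp (-θ j) * (exp (θ k) * P j k)) (θ k) := by
  have hexpNeg : HasDerivAt (fun s => exp (-s)) (-exp (-θ k)) (θ k) := by
    simpa using (hasDerivAt_neg (θ k)).exp
  have := ((hexpNeg.comp_update_apply j).mul
    ((hasDerivAt_sum_exp_update θ (P j) k).add_const 1)).sub_const 1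
  rwa [update_eq_self] at this

theorem hasDerivAt_H0_update (P : Matrix n n ℝ) (lam mu θ : n → ℝ) (k : n) :
    HasDerivAt (fun s => H0 P lam mu (update θ k s)) (partialH0 P lam mu θ k) (θ k) := by
  refine ((hasDerivAt_sum_exp_update θ lam k).add (HasDerivAt.fun_sum (u := Finset.univ)
    fun j _ => (hasDerivAt_hVec_update P θ k j).mul_const (mu j))).congr_deriv ?_
  simp only [ite_mul, neg_mul, zero_mul, add_mul, Finset.sum_add_distrib, Finset.sum_ite_eq',
    Finset.mem_univ, ↓reduceIte, partialH0, Finset.mul_sum]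
  ring_nf

theorem partialH0_eq_neg_dual {P : Matrix n n ℝ} {lam mu ν θ : n → ℝ}
    (hν : (1 - Pᵀ) *ᵥ ν = lam) (hθ : ∀ k, exp (θ k) = mu k / ν k) (k : n) :
    partialH0 P lam mu θ k = -(dualArrival P ν - (1 - (dualMatrix P ν)ᵀ) *ᵥ mu : n → ℝ) k := by
  have hne : ∀ j, mu j ≠ 0 ∧ ν j ≠ 0 := fun j => div_ne_zero_iff.mp (hθ j ▸ (exp_pos _).ne')
  have hexpNeg : ∀ j, exp (-θ j) = ν j / mu j := fun j => by rw [Real.exp_neg, hθ, inv_div]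
  have hlam : lam k = ν k - ∑ j, P j k * ν j := by
    simp [← hν, sub_mulVec, mulVec, dotProduct]
  have hin : ∑ j, ν j / mu j * P j k * mu j = ∑ j, P j k * ν j :=
    Finset.sum_congr rfl fun j _ => by field_simp [(hne j).1]
  have hout : ∑ l, (mu l / ν l - 1) * P k l = ∑ l, mu l / ν l * P k l - ∑ l, P k l := by
    simp only [sub_mul, one_mul, Finset.sum_sub_distrib]
  have hdual : ((1 - (dualMatrix P ν)ᵀ) *ᵥ mu) k = mu k - ν k * ∑ l, mu l / ν l * P k l := by
    rw [sub_mulVec, one_mulVec, Pi.sub_apply, Finset.mul_sum]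
    simp only [mulVec, dotProduct, transpose_apply, dualMatrix, of_apply]
    congr 1
    exact Finset.sum_congr rfl fun l _ => by field_simp [(hne l).2]
  simp only [partialH0, hθ, hexpNeg, hin, hout, hlam, Pi.sub_apply, hdual, dualArrival]
  field_simp [(hne k).1, (hne k).2]
  ring

end NetworkDuality

theorem stmt_16_general {K : ℕ} (P : Matrix (Fin (K + 1)) (Fin (K + 1)) ℝ)
    (hspec : ∀ z ∈ spectrum ℂ (P.map Complex.ofReal), ‖z‖ < 1)
    (lam mu : Fin (K + 1) → ℝ) (hmu : ∀ k, 0 < mu k)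
    (ν : Fin (K + 1) → ℝ)
    (hν : ν = ((1 : Matrix (Fin (K + 1)) (Fin (K + 1)) ℝ) - Pᵀ)⁻¹ *ᵥ lam)
    (hνpos : ∀ k, 0 < ν k)
    (θstar : Fin (K + 1) → ℝ) (hθ : ∀ k, θstar k = Real.log (mu k / ν k))
    (Pbar : Matrix (Fin (K + 1)) (Fin (K + 1)) ℝ)
    (hPbar : ∀ k l, Pbar k l = ν l * P l k / ν k)
    (lamBar : Fin (K + 1) → ℝ)
    (hlamBar : ∀ k, lamBar k = ν k * (1 - ∑ l, P k l)) :
    ∀ k : Fin (K + 1),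
      HasDerivAt
        (fun s : ℝ =>
          (∑ k', (Real.exp (Function.update θstar k s k') - 1) * lam k')
            + ∑ k', (Real.exp (-(Function.update θstar k s k'))
                * ((∑ l, (Real.exp (Function.update θstar k s l) - 1) * P k' l) + 1) - 1) * mu k')
        (-(lamBar - (((1 : Matrix (Fin (K + 1)) (Fin (K + 1)) ℝ) - Pbarᵀ) *ᵥ mu)) k)
        (θstar k) := by
  have hunit : IsUnit (1 - Pᵀ) := by
    rw [← transpose_one, ← transpose_sub, isUnit_transpose]
    exact isUnit_one_sub_of_one_notMem_spectrum fun h => by simpa using hspec 1 h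
  have htraffic : (1 - Pᵀ) *ᵥ ν = lam := by
    rw [hν, mulVec_mulVec, mul_nonsing_inv _ ((isUnit_iff_isUnit_det _).mp hunit), one_mulVec]
  have hexp : ∀ k, exp (θstar k) = mu k / ν k := fun k => by
    rw [hθ, exp_log (div_pos (hmu k) (hνpos k))]
  obtain rfl : Pbar = dualMatrix P ν := ext hPbar
  obtain rfl : lamBar = dualArrival P ν := funext hlamBar
  intro k
  exact (hasDerivAt_H0_update P lam mu θstar k).congr_deriv (partialH0_eq_neg_dual htraffic hexp k)

/-- Equation (14): `−∇H₀(θ*) = λ̄ − (I − P̄ᵀ) μ`, where `θ*_k = ln(μ_k/ν_k)`,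
`p̄_{kl} = ν_l p_{lk}/ν_k`, `λ̄_k = ν_k (1 − Σ_l p_{kl})`, stated componentwise:
the `k`-th partial derivative of `H₀` at `θ*` equals `−(λ̄ − (I − P̄ᵀ) μ)_k`. -/
theorem stmt_16 {K : ℕ} (P : Matrix (Fin (K + 1)) (Fin (K + 1)) ℝ)
    (hP : ∀ k l, 0 ≤ P k l) (hProw : ∀ k, ∑ l, P k l ≤ 1)
    (hspec : ∀ z ∈ spectrum ℂ (P.map Complex.ofReal), ‖z‖ < 1)
    (lam mu : Fin (K + 1) → ℝ) (hlam : ∀ k, 0 < lam k) (hmu : ∀ k, 0 < mu k)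
    (ν : Fin (K + 1) → ℝ)
    (hν : ν = ((1 : Matrix (Fin (K + 1)) (Fin (K + 1)) ℝ) - Pᵀ)⁻¹ *ᵥ lam)
    (hνpos : ∀ k, 0 < ν k)
    (θstar : Fin (K + 1) → ℝ) (hθ : ∀ k, θstar k = Real.log (mu k / ν k))
    (Pbar : Matrix (Fin (K + 1)) (Fin (K + 1)) ℝ)
    (hPbar : ∀ k l, Pbar k l = ν l * P l k / ν k)
    (lamBar : Fin (K + 1) → ℝ)
    (hlamBar : ∀ k, lamBar k = ν k * (1 - ∑ l, P k l)) :
    ∀ k : Fin (K + 1),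
      HasDerivAt
        (fun s : ℝ =>
          (∑ k', (Real.exp (Function.update θstar k s k') - 1) * lam k')
            + ∑ k', (Real.exp (-(Function.update θstar k s k'))
                * ((∑ l, (Real.exp (Function.update θstar k s l) - 1) * P k' l) + 1) - 1) * mu k')
        (-(lamBar - (((1 : Matrix (Fin (K + 1)) (Fin (K + 1)) ℝ) - Pbarᵀ) *ᵥ mu)) k)
        (θstar k) :=
  stmt_16_general P hspec lam mu hmu ν hν hνpos θstar hθ Pbar hPbar lamBar hlamBar
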